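/- arXiv:2003.13589 — 3 statements merged into one kernel-verified Lean document; each statement's English description precedes it below -/
import Mathlib

section
/- Let t < t' be integers such that no value of A and no value of B lies strictly between t and t'. Then for all indices 0 ≤ i ≤ n, 0 ≤ j ≤ n, we have 0 ≤ dp_{t'}[i][j] − dp_t[i][j] ≤ 1. -/
/-- `IsCIS A B i j ia jb` says that the index sequences `ia, jb` form a common
(strictly) increasing subsequence of `A[1..i]` and `B[1..j]`. -/
def IsCIS (A B : ℕ → ℤ) (i j : ℕ) {l : ℕ} (ia jb : Fin l → ℕ) : Prop :=
  StrictMono ia ∧ StrictMono jb ∧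
  (∀ k, 1 ≤ ia k ∧ ia k ≤ i) ∧
  (∀ k, 1 ≤ jb k ∧ jb k ≤ j) ∧
  (∀ k, A (ia k) = B (jb k)) ∧
  StrictMono fun k => A (ia k)

/-- `dpLCIS A B t i j` : maximal length of a common increasing subsequence of
`A[1..i]` and `B[1..j]` all of whose values are `≤ t` (0 if none exists). -/
noncomputable def dpLCIS (A B : ℕ → ℤ) (t : ℤ) (i j : ℕ) : ℕ :=
  sSup {l | ∃ ia jb : Fin l → ℕ, IsCIS A B i j ia jb ∧ ∀ k, A (ia k) ≤ t}

/-- `lcisTo A B x y` : maximal length of a common increasing subsequence of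
`A[1..x]` and `B[1..y]` whose last indices are exactly `x` and `y`. -/
noncomputable def lcisTo (A B : ℕ → ℤ) (x y : ℕ) : ℕ :=
  sSup {l | ∃ ia jb : Fin l → ℕ, IsCIS A B x y ia jb ∧
    ∃ k : Fin l, (∀ k', k' ≤ k) ∧ ia k = x ∧ jb k = y}

/-- `lcisLen A B i j` : maximal length of a common increasing subsequence of
`A[1..i]` and `B[1..j]`. -/
noncomputable def lcisLen (A B : ℕ → ℤ) (i j : ℕ) : ℕ :=
  sSup {l | ∃ ia jb : Fin l → ℕ, IsCIS A B i j ia jb}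

lemma cis_len_le {A B : ℕ → ℤ} {i j l : ℕ} {ia jb : Fin l → ℕ}
    (h : IsCIS A B i j ia jb) : l ≤ i := by
  obtain ⟨hia, _, hbd, _⟩ := h
  rcases Nat.eq_zero_or_pos l with rfl | hl
  · exact Nat.zero_le _
  have key : ∀ m (hm : m < l), m + 1 ≤ ia ⟨m, hm⟩ := by
    intro m
    induction m with
    | zero => intro hm; exact (hbd ⟨0, hm⟩).1
    | succ m ih =>
      intro hm
      have hm' : m < l := Nat.lt_of_succ_lt hm
      have h1 := ih hm'
      have h2 : ia ⟨m, hm'⟩ < ia ⟨m + 1, hm⟩ :=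
        hia (show (⟨m, hm'⟩ : Fin l) < ⟨m + 1, hm⟩ from Fin.mk_lt_mk.mpr (Nat.lt_succ_self m))
      omega
  have h3 := key (l - 1) (by omega)
  have h4 := (hbd ⟨l - 1, by omega⟩).2
  omega

theorem dp_threshold_diff (n : ℕ) (A B : ℕ → ℤ) (t t' : ℤ) (htt' : t < t')
    (hA : ∀ k, 1 ≤ k → k ≤ n → ¬(t < A k ∧ A k < t'))
    (hB : ∀ k, 1 ≤ k → k ≤ n → ¬(t < B k ∧ B k < t'))
    (i j : ℕ) (hin : i ≤ n) (hjn : j ≤ n) :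
    dpLCIS A B t i j ≤ dpLCIS A B t' i j ∧
      dpLCIS A B t' i j ≤ dpLCIS A B t i j + 1 := by
  set S : Set ℕ := {l | ∃ ia jb : Fin l → ℕ, IsCIS A B i j ia jb ∧ ∀ k, A (ia k) ≤ t} with hS
  set S' : Set ℕ := {l | ∃ ia jb : Fin l → ℕ, IsCIS A B i j ia jb ∧ ∀ k, A (ia k) ≤ t'} with hS'
  have hzeroCIS : IsCIS A B i j (Fin.elim0 : Fin 0 → ℕ) (Fin.elim0 : Fin 0 → ℕ) :=
    ⟨fun a => a.elim0, fun a => a.elim0, fun k => k.elim0, fun k => k.elim0,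
      fun k => k.elim0, fun a => a.elim0⟩
  have hzeroS : (0 : ℕ) ∈ S := ⟨Fin.elim0, Fin.elim0, hzeroCIS, fun k => k.elim0⟩
  have hzeroS' : (0 : ℕ) ∈ S' := ⟨Fin.elim0, Fin.elim0, hzeroCIS, fun k => k.elim0⟩
  have hbddS : BddAbove S := ⟨i, fun l hl => by
    obtain ⟨ia, jb, hc, _⟩ := hl; exact cis_len_le hc⟩
  have hbddS' : BddAbove S' := ⟨i, fun l hl => by
    obtain ⟨ia, jb, hc, _⟩ := hl; exact cis_len_le hc⟩
  constructor
  · apply csSup_le_csSup hbddS' ⟨0, hzeroS⟩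
    rintro l ⟨ia, jb, hc, hle⟩
    exact ⟨ia, jb, hc, fun k => (hle k).trans htt'.le⟩
  · apply csSup_le ⟨0, hzeroS'⟩
    rintro l ⟨ia, jb, hc, hle⟩
    rcases Nat.eq_zero_or_pos l with rfl | hl
    · omega
    obtain ⟨hia, hjb, hbdA, hbdB, heq, hmonoA⟩ := hc
    have hval : ∀ m : Fin l, (m : ℕ) < l - 1 → A (ia m) ≤ t := by
      intro m hm
      have hlt : A (ia m) < A (ia ⟨l - 1, by omega⟩) :=
        hmonoA (show m < ⟨l - 1, by omega⟩ from Fin.lt_def.mpr (by simpa using hm))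
      have h2 : A (ia ⟨l - 1, by omega⟩) ≤ t' := hle _
      have h3 := hA (ia m) (hbdA m).1 (le_trans (hbdA m).2 hin)
      omega
    have hmem : l - 1 ∈ S := by
      refine ⟨fun m => ia ⟨m, by omega⟩, fun m => jb ⟨m, by omega⟩,
        ⟨?_, ?_, ?_, ?_, ?_, ?_⟩, ?_⟩
      · intro a b hab
        exact hia (Fin.mk_lt_mk.mpr (Fin.lt_def.mp hab))
      · intro a b hab
        exact hjb (Fin.mk_lt_mk.mpr (Fin.lt_def.mp hab))
      · intro k; exact hbdA _
      · intro k; exact hbdB _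
      · intro k; exact heq _
      · intro a b hab
        exact hmonoA (Fin.mk_lt_mk.mpr (Fin.lt_def.mp hab))
      · intro k
        exact hval _ (by simpa using k.isLt)
    have h5 := le_csSup hbddS hmem
    have h6 : dpLCIS A B t i j = sSup S := rfl
    omega
end

section
/- Let t < t' be integers such that no value of A and no value of B lies strictly between t and t'. If 1 ≤ i, j ≤ n and it is not the case that A[i] = B[j] = t', then dp_{t'}[i][j] = max( dp_t[i][j], dp_{t'}[i−1][j], dp_{t'}[i][j−1] ), where dp_t[i'][j'] = 0 whenever i' = 0 or j' = 0. -/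
lemma cis_bdd (A B : ℕ → ℤ) (t : ℤ) (i j : ℕ) :
    BddAbove {l | ∃ ia jb : Fin l → ℕ, IsCIS A B i j ia jb ∧ ∀ k, A (ia k) ≤ t} := by
  refine ⟨i + 1, fun l hl => ?_⟩
  obtain ⟨ia, jb, ⟨hmono, _, hia, _, _, _⟩, _⟩ := hl
  have hinj : Function.Injective
      (fun k : Fin l => (⟨ia k, Nat.lt_succ_of_le (hia k).2⟩ : Fin (i+1))) := by
    intro a b h
    exact hmono.injective (by simpa using congrArg Fin.val h)
  simpa using Fintype.card_le_of_injective _ hinj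

lemma cis_zero (A B : ℕ → ℤ) (t : ℤ) (i j : ℕ) :
    0 ∈ {l | ∃ ia jb : Fin l → ℕ, IsCIS A B i j ia jb ∧ ∀ k, A (ia k) ≤ t} :=
  ⟨Fin.elim0, Fin.elim0,
    ⟨fun a => a.elim0, fun a => a.elim0, fun k => k.elim0, fun k => k.elim0,
      fun k => k.elim0, fun a => a.elim0⟩, fun k => k.elim0⟩

theorem dp_recurrence_nomatch (n : ℕ) (A B : ℕ → ℤ) (t t' : ℤ) (htt' : t < t')
    (hA : ∀ k, 1 ≤ k → k ≤ n → ¬(t < A k ∧ A k < t'))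
    (hB : ∀ k, 1 ≤ k → k ≤ n → ¬(t < B k ∧ B k < t'))
    (i j : ℕ) (hi1 : 1 ≤ i) (hin : i ≤ n) (hj1 : 1 ≤ j) (hjn : j ≤ n)
    (hnm : ¬(A i = t' ∧ B j = t')) :
    dpLCIS A B t' i j =
      max (dpLCIS A B t i j)
        (max (dpLCIS A B t' (i - 1) j) (dpLCIS A B t' i (j - 1))) := by
  have hbdd := fun (t : ℤ) i j => cis_bdd A B t i j
  unfold dpLCIS
  apply le_antisymm
  · apply csSup_le ⟨0, cis_zero A B t' i j⟩
    rintro l ⟨ia, jb, ⟨hsia, hsjb, hiar, hjbr, heq, hvm⟩, hle⟩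
    by_cases hI : ∃ k, ia k = i
    · by_cases hJ : ∃ k, jb k = j
      · obtain ⟨k1, hk1⟩ := hI
        obtain ⟨k2, hk2⟩ := hJ
        have hle1 : ∀ k, k ≤ k1 := by
          intro k
          by_contra h
          push_neg at h
          have h2 := hsia h
          rw [hk1] at h2
          exact absurd (hiar k).2 (by omega)
        have hle2 : ∀ k, k ≤ k2 := by
          intro k
          by_contra h
          push_neg at h
          have h2 := hsjb h
          rw [hk2] at h2
          exact absurd (hjbr k).2 (by omega)
        have hk12 : k1 = k2 := le_antisymm (hle2 k1) (hle1 k2)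
        have hAi : A i = B j := by rw [← hk1, ← hk2, ← hk12]; exact heq k1
        have hAit' : A i < t' := by
          have h1 : A i ≤ t' := by rw [← hk1]; exact hle k1
          rcases lt_or_eq_of_le h1 with h | h
          · exact h
          · exact absurd ⟨h, hAi ▸ h⟩ hnm
        have hAt : A i ≤ t := by
          have h3 := hA i hi1 hin
          by_contra h; push_neg at h
          exact h3 ⟨h, hAit'⟩
        have hmem : l ∈ {l | ∃ ia jb : Fin l → ℕ,
            IsCIS A B i j ia jb ∧ ∀ k, A (ia k) ≤ t} := by
          refine ⟨ia, jb, ⟨hsia, hsjb, hiar, hjbr, heq, hvm⟩, fun k => ?_⟩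
          calc A (ia k) ≤ A (ia k1) := hvm.monotone (hle1 k)
            _ = A i := by rw [hk1]
            _ ≤ t := hAt
        calc l ≤ dpLCIS A B t i j := le_csSup (hbdd t i j) hmem
          _ ≤ _ := le_max_left _ _
      · push_neg at hJ
        have hmem : l ∈ {l | ∃ ia jb : Fin l → ℕ,
            IsCIS A B i (j-1) ia jb ∧ ∀ k, A (ia k) ≤ t'} := by
          refine ⟨ia, jb, ⟨hsia, hsjb, hiar, fun k => ⟨(hjbr k).1, ?_⟩, heq, hvm⟩, hle⟩
          have h1 := (hjbr k).2; have h2 := hJ k; omega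
        calc l ≤ dpLCIS A B t' i (j-1) := le_csSup (hbdd t' i (j-1)) hmem
          _ ≤ _ := le_trans (le_max_right _ _) (le_max_right _ _)
    · push_neg at hI
      have hmem : l ∈ {l | ∃ ia jb : Fin l → ℕ,
          IsCIS A B (i-1) j ia jb ∧ ∀ k, A (ia k) ≤ t'} := by
        refine ⟨ia, jb, ⟨hsia, hsjb, fun k => ⟨(hiar k).1, ?_⟩, hjbr, heq, hvm⟩, hle⟩
        have h1 := (hiar k).2; have h2 := hI k; omega
      calc l ≤ dpLCIS A B t' (i-1) j := le_csSup (hbdd t' (i-1) j) hmem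
        _ ≤ _ := le_trans (le_max_left _ _) (le_max_right _ _)
  · apply max_le
    · apply csSup_le ⟨0, cis_zero A B t i j⟩
      rintro l ⟨ia, jb, hcis, hle⟩
      exact le_csSup (hbdd t' i j) ⟨ia, jb, hcis, fun k => (hle k).trans htt'.le⟩
    · apply max_le
      · apply csSup_le ⟨0, cis_zero A B t' (i-1) j⟩
        rintro l ⟨ia, jb, ⟨h1,h2,h3,h4,h5,h6⟩, hle⟩
        exact le_csSup (hbdd t' i j) ⟨ia, jb,
          ⟨h1, h2, fun k => ⟨(h3 k).1, le_trans (h3 k).2 (Nat.sub_le i 1)⟩, h4, h5, h6⟩, hle⟩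
      · apply csSup_le ⟨0, cis_zero A B t' i (j-1)⟩
        rintro l ⟨ia, jb, ⟨h1,h2,h3,h4,h5,h6⟩, hle⟩
        exact le_csSup (hbdd t' i j) ⟨ia, jb,
          ⟨h1, h2, h3, fun k => ⟨(h4 k).1, le_trans (h4 k).2 (Nat.sub_le j 1)⟩, h5, h6⟩, hle⟩
end

section
/- Let t < t' be integers such that no value of A and no value of B lies strictly between t and t'. If A[i] = B[j] = t' for some 1 ≤ i, j ≤ n, then dpʷ_{t'}[i][j] = max( dpʷ_t[i][j], dpʷ_{t'}[i−1][j−1] + 1 ), where dpʷ_t[i'][j'] = 0 whenever i' = 0 or j' = 0. -/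
/-- `IsCWIS A B i j ia jb` says that the index sequences `ia, jb` form a common
weakly increasing subsequence of `A[1..i]` and `B[1..j]`. -/
def IsCWIS (A B : ℕ → ℤ) (i j : ℕ) {l : ℕ} (ia jb : Fin l → ℕ) : Prop :=
  StrictMono ia ∧ StrictMono jb ∧
  (∀ k, 1 ≤ ia k ∧ ia k ≤ i) ∧
  (∀ k, 1 ≤ jb k ∧ jb k ≤ j) ∧
  (∀ k, A (ia k) = B (jb k)) ∧
  Monotone fun k => A (ia k)

/-- `dpLCWIS A B t i j` : maximal length of a common weakly increasing subsequence
of `A[1..i]` and `B[1..j]` all of whose values are `≤ t` (0 if none exists). -/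
noncomputable def dpLCWIS (A B : ℕ → ℤ) (t : ℤ) (i j : ℕ) : ℕ :=
  sSup {l | ∃ ia jb : Fin l → ℕ, IsCWIS A B i j ia jb ∧ ∀ k, A (ia k) ≤ t}

/-- `lcwisTo A B x y` : maximal length of a common weakly increasing subsequence
of `A[1..x]` and `B[1..y]` whose last indices are exactly `x` and `y`. -/
noncomputable def lcwisTo (A B : ℕ → ℤ) (x y : ℕ) : ℕ :=
  sSup {l | ∃ ia jb : Fin l → ℕ, IsCWIS A B x y ia jb ∧
    ∃ k : Fin l, (∀ k', k' ≤ k) ∧ ia k = x ∧ jb k = y}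

lemma cwis_len_le {A B : ℕ → ℤ} {i j l : ℕ} {ia jb : Fin l → ℕ}
    (h : IsCWIS A B i j ia jb) : l ≤ i := by
  obtain ⟨hsm, -, hb, -, -, -⟩ := h
  rcases Nat.eq_zero_or_pos l with rfl | hl
  · exact Nat.zero_le i
  have key : ∀ m (hm : m < l), m + 1 ≤ ia ⟨m, hm⟩ := by
    intro m
    induction m with
    | zero => intro hm; exact (hb _).1
    | succ p ih =>
      intro hm
      have hp : p < l := Nat.lt_of_succ_lt hm
      have h1 := ih hp
      have h2 : ia ⟨p, hp⟩ < ia ⟨p+1, hm⟩ := hsm (by simp [Fin.lt_def])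
      omega
  have k1 := key (l-1) (by omega)
  have k2 := (hb ⟨l-1, by omega⟩).2
  omega

lemma zero_mem_cwis (A B : ℕ → ℤ) (t : ℤ) (i j : ℕ) :
    0 ∈ {l | ∃ ia jb : Fin l → ℕ, IsCWIS A B i j ia jb ∧ ∀ k, A (ia k) ≤ t} :=
  ⟨Fin.elim0, Fin.elim0, ⟨fun a => a.elim0, fun a => a.elim0, fun a => a.elim0,
    fun a => a.elim0, fun a => a.elim0, fun a => a.elim0⟩, fun a => a.elim0⟩

lemma bdd_cwis (A B : ℕ → ℤ) (t : ℤ) (i j : ℕ) :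
    BddAbove {l | ∃ ia jb : Fin l → ℕ, IsCWIS A B i j ia jb ∧ ∀ k, A (ia k) ≤ t} :=
  ⟨i, fun l hl => by obtain ⟨ia, jb, hc, -⟩ := hl; exact cwis_len_le hc⟩

lemma snoc_forall {α : Type*} {l : ℕ} {P : α → Prop} (f : Fin l → α) (c : α)
    (hf : ∀ k, P (f k)) (hc : P c) :
    ∀ k : Fin (l+1), P ((Fin.snoc f c : Fin (l+1) → α) k) := by
  intro k
  refine Fin.lastCases ?_ (fun k' => ?_) k
  · simpa using hc
  · simpa using hf k'

lemma snoc_strictMono {l : ℕ} (f : Fin l → ℕ) (c : ℕ) (hf : StrictMono f)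
    (hc : ∀ k, f k < c) : StrictMono (Fin.snoc f c : Fin (l+1) → ℕ) := by
  intro a b hab
  have ha : a ≠ Fin.last l := Fin.ne_last_of_lt hab
  obtain ⟨a', rfl⟩ := Fin.exists_castSucc_eq.2 ha
  revert hab
  refine Fin.lastCases ?_ ?_ b
  · intro _; simpa using hc a'
  · intro b' h; simpa using hf (show a' < b' by simpa using h)

lemma snoc_val_mono {l : ℕ} (A : ℕ → ℤ) (f : Fin l → ℕ) (c : ℕ) (t' : ℤ)
    (hmono : Monotone fun k => A (f k)) (hle : ∀ k, A (f k) ≤ t') (hc : A c = t') :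
    Monotone fun k : Fin (l+1) => A ((Fin.snoc f c : Fin (l+1) → ℕ) k) := by
  intro a b hab
  revert hab
  refine Fin.lastCases ?_ ?_ b
  · intro _
    refine Fin.lastCases ?_ (fun a' => ?_) a
    · simp
    · simp only [Fin.snoc_castSucc, Fin.snoc_last]
      rw [hc]; exact hle a'
  · intro b' hab
    have hb' : a ≠ Fin.last l := Fin.ne_last_of_lt (lt_of_le_of_lt hab (Fin.castSucc_lt_last b'))
    obtain ⟨a', rfl⟩ := Fin.exists_castSucc_eq.2 hb'
    simp only [Fin.snoc_castSucc]
    exact hmono (show a' ≤ b' by simpa using hab)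

theorem dpw_recurrence_match (n : ℕ) (A B : ℕ → ℤ) (t t' : ℤ) (htt' : t < t')
    (hA : ∀ k, 1 ≤ k → k ≤ n → ¬(t < A k ∧ A k < t'))
    (hB : ∀ k, 1 ≤ k → k ≤ n → ¬(t < B k ∧ B k < t'))
    (i j : ℕ) (hi1 : 1 ≤ i) (hin : i ≤ n) (hj1 : 1 ≤ j) (hjn : j ≤ n)
    (hAi : A i = t') (hBj : B j = t') :
    dpLCWIS A B t' i j =
      max (dpLCWIS A B t i j) (dpLCWIS A B t' (i - 1) (j - 1) + 1) := by
  apply le_antisymm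
  · refine le_trans ?_ (le_max_right _ _)
    apply csSup_le ⟨0, zero_mem_cwis A B t' i j⟩
    rintro l ⟨ia, jb, ⟨hia, hjb, hbi, hbj, heq, hmono⟩, hle⟩
    rcases Nat.eq_zero_or_pos l with rfl | hl
    · exact Nat.zero_le _
    obtain ⟨m, rfl⟩ := Nat.exists_eq_succ_of_ne_zero hl.ne'
    have hmem : m ∈ {l | ∃ ia jb : Fin l → ℕ, IsCWIS A B (i-1) (j-1) ia jb ∧
        ∀ k, A (ia k) ≤ t'} := by
      refine ⟨fun k => ia k.castSucc, fun k => jb k.castSucc,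
        ⟨?_, ?_, ?_, ?_, ?_, ?_⟩, fun k => hle _⟩
      · exact fun a b hab => hia (by simpa using hab)
      · exact fun a b hab => hjb (by simpa using hab)
      · intro k
        have h1 := (hbi k.castSucc).1
        have h2 : ia k.castSucc < ia (Fin.last m) := hia (Fin.castSucc_lt_last k)
        have h3 := (hbi (Fin.last m)).2
        show 1 ≤ ia k.castSucc ∧ ia k.castSucc ≤ i - 1
        omega
      · intro k
        have h1 := (hbj k.castSucc).1
        have h2 : jb k.castSucc < jb (Fin.last m) := hjb (Fin.castSucc_lt_last k)
        have h3 := (hbj (Fin.last m)).2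
        show 1 ≤ jb k.castSucc ∧ jb k.castSucc ≤ j - 1
        omega
      · exact fun k => heq _
      · exact fun a b hab => hmono (by simpa using hab)
    have h4 : m ≤ dpLCWIS A B t' (i-1) (j-1) :=
      le_csSup (bdd_cwis A B t' (i-1) (j-1)) hmem
    omega
  · apply max_le
    · apply csSup_le ⟨0, zero_mem_cwis A B t i j⟩
      rintro l ⟨ia, jb, hc, hle⟩
      exact le_csSup (bdd_cwis A B t' i j) ⟨ia, jb, hc, fun k => (hle k).trans htt'.le⟩
    · have hdmem : dpLCWIS A B t' (i-1) (j-1) ∈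
          {l | ∃ ia jb : Fin l → ℕ, IsCWIS A B (i-1) (j-1) ia jb ∧ ∀ k, A (ia k) ≤ t'} :=
        Nat.sSup_mem ⟨0, zero_mem_cwis A B t' (i-1) (j-1)⟩ (bdd_cwis A B t' (i-1) (j-1))
      obtain ⟨ia, jb, ⟨hia, hjb, hbi, hbj, heq, hmono⟩, hle⟩ := hdmem
      refine le_csSup (bdd_cwis A B t' i j) ⟨Fin.snoc ia i, Fin.snoc jb j,
        ⟨?_, ?_, ?_, ?_, ?_, ?_⟩, ?_⟩
      · exact snoc_strictMono ia i hia (fun k => by have := (hbi k).2; omega)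
      · exact snoc_strictMono jb j hjb (fun k => by have := (hbj k).2; omega)
      · exact snoc_forall (P := fun x => 1 ≤ x ∧ x ≤ i) ia i
          (fun k => ⟨(hbi k).1, ((hbi k).2).trans (by omega)⟩) ⟨hi1, le_refl i⟩
      · exact snoc_forall (P := fun x => 1 ≤ x ∧ x ≤ j) jb j
          (fun k => ⟨(hbj k).1, ((hbj k).2).trans (by omega)⟩) ⟨hj1, le_refl j⟩
      · intro k
        refine Fin.lastCases ?_ (fun k' => ?_) k
        · simp [hAi, hBj]
        · simpa using heq k'
      · exact snoc_val_mono A ia i t' hmono hle hAi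
      · exact snoc_forall (P := fun x => A x ≤ t') ia i (fun k => hle k) (le_of_eq hAi)
end
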